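/- arXiv:0710.1854 — 10 statements merged into one kernel-verified Lean document; each statement's English description precedes it below -/
import Mathlib

section
/- Let V ⊂ ℝ² be open, let p : V → ℝ² be a C² map with component partial derivatives p_u, p_v, p_uu, p_uv, p_vv, and let f : ℝ² → ℝ be C². Define q : V → ℝ³ by q(u,v) = (p(u,v), f(p(u,v))). Then for every (u,v) ∈ V one has [q_u, q_v, q_uu] = [p_u, p_v] · (p_uᵀ · D²f(p) · p_u), [q_u, q_v, q_uv] = [p_u, p_v] · (p_uᵀ · D²f(p) · p_v), and [q_u, q_v, q_vv] = [p_u, p_v] · (p_vᵀ · D²f(p) · p_v), where D²f denotes the Hessian matrix of f. -/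
/-!
Differentiating `q = (p, f ∘ p)` gives `q_u = (p_u, Df(p) p_u)` and
`q_uu = (p_uu, D²f(p)(p_u, p_u) + Df(p) p_uu)`, and likewise for the other derivatives.
So in each determinant the last coordinate is, up to the Hessian term, the linear form `Df(p)`
applied to the first two coordinates; subtracting that combination of rows leaves
`[p_u, p_v]` times the Hessian term. The mixed case also uses the symmetry of `D²f`.
-/

noncomputable section

/-- Determinant of the 2×2 matrix with columns `X`, `Y`. -/
def det2 (X Y : ℝ × ℝ) : ℝ := X.1 * Y.2 - X.2 * Y.1

/-- Determinant of the 3×3 matrix with columns `X`, `Y`, `Z`,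
where ℝ³ is modelled as `(ℝ × ℝ) × ℝ`. -/
def det3 (X Y Z : (ℝ × ℝ) × ℝ) : ℝ :=
  X.1.1 * (Y.1.2 * Z.2 - Y.2 * Z.1.2)
    - Y.1.1 * (X.1.2 * Z.2 - X.2 * Z.1.2)
    + Z.1.1 * (X.1.2 * Y.2 - X.2 * Y.1.2)

/-- Partial derivative in the first (`u`) direction. -/
def Du {F : Type*} [NormedAddCommGroup F] [NormedSpace ℝ F] (g : ℝ × ℝ → F) (w : ℝ × ℝ) : F :=
  fderiv ℝ g w (1, 0)

/-- Partial derivative in the second (`v`) direction. -/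
def Dv {F : Type*} [NormedAddCommGroup F] [NormedSpace ℝ F] (g : ℝ × ℝ → F) (w : ℝ × ℝ) : F :=
  fderiv ℝ g w (0, 1)

/-- Hessian of `f` at `p`, as a bilinear form: `hess f p a b = aᵀ · D²f(p) · b`. -/
def hess (f : ℝ × ℝ → ℝ) (p : ℝ × ℝ) (a b : ℝ × ℝ) : ℝ :=
  fderiv ℝ (fderiv ℝ f) p a b

open scoped Topology

section Graph

variable {𝕜 E F G : Type*} [NontriviallyNormedField 𝕜]
  [NormedAddCommGroup E] [NormedSpace 𝕜 E] [NormedAddCommGroup F] [NormedSpace 𝕜 F]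
  [NormedAddCommGroup G] [NormedSpace 𝕜 G] {p : E → F} {f : F → G} {w : E}

theorem fderiv_prodMk_comp_apply (hp : DifferentiableAt 𝕜 p w)
    (hf : DifferentiableAt 𝕜 f (p w)) (e : E) :
    fderiv 𝕜 (fun x => (p x, f (p x))) w e
      = (fderiv 𝕜 p w e, fderiv 𝕜 f (p w) (fderiv 𝕜 p w e)) := by
  rw [hp.fderiv_prodMk (f₂ := fun x => f (p x)) (hf.comp w hp), ContinuousLinearMap.prod_apply,
    fderiv_fun_comp w hf hp, ContinuousLinearMap.comp_apply]

theorem fderiv_fderiv_prodMk_comp_apply (hp : ContDiffAt 𝕜 2 p w)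
    (hf : ContDiffAt 𝕜 2 f (p w)) (e e' : E) :
    fderiv 𝕜 (fun x => fderiv 𝕜 (fun y => (p y, f (p y))) x e') w e
      = (fderiv 𝕜 (fun x => fderiv 𝕜 p x e') w e,
          fderiv 𝕜 (fderiv 𝕜 f) (p w) (fderiv 𝕜 p w e) (fderiv 𝕜 p w e')
            + fderiv 𝕜 f (p w) (fderiv 𝕜 (fun x => fderiv 𝕜 p x e') w e)) := by
  have hp_near : ∀ᶠ x in 𝓝 w, DifferentiableAt 𝕜 p x :=
    (hp.eventually (by simp)).mono fun x hx => hx.differentiableAt (by simp)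
  have hf_near : ∀ᶠ x in 𝓝 w, DifferentiableAt 𝕜 f (p x) :=
    hp.continuousAt.eventually ((hf.eventually (by simp)).mono
      fun y hy => hy.differentiableAt (by simp))
  have hDp : DifferentiableAt 𝕜 (fderiv 𝕜 p) w :=
    (hp.fderiv_right (m := 1) le_rfl).differentiableAt one_ne_zero
  have hDf : DifferentiableAt 𝕜 (fderiv 𝕜 f) (p w) :=
    (hf.fderiv_right (m := 1) le_rfl).differentiableAt one_ne_zero
  have hDp_e' : DifferentiableAt 𝕜 (fun x => fderiv 𝕜 p x e') w :=
    hDp.clm_apply (differentiableAt_const e')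
  have hDf_p : DifferentiableAt 𝕜 (fun x => fderiv 𝕜 f (p x)) w :=
    hDf.comp w (hp.differentiableAt two_ne_zero)
  have h_eq : (fun x => fderiv 𝕜 (fun y => (p y, f (p y))) x e')
      =ᶠ[𝓝 w] fun x => (fderiv 𝕜 p x e', fderiv 𝕜 f (p x) (fderiv 𝕜 p x e')) :=
    (hp_near.and hf_near).mono fun x hx => fderiv_prodMk_comp_apply hx.1 hx.2 e'
  rw [h_eq.fderiv_eq, hDp_e'.fderiv_prodMk (hDf_p.clm_apply hDp_e'),
    ContinuousLinearMap.prod_apply, fderiv_clm_apply hDf_p hDp_e',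
    fderiv_fun_comp w hDf (hp.differentiableAt two_ne_zero)]
  simp only [add_apply, ContinuousLinearMap.comp_apply, ContinuousLinearMap.flip_apply]
  exact congrArg _ (add_comm _ _)

end Graph

theorem det3_prodMk_apply_add (g : (ℝ × ℝ) →L[ℝ] ℝ) (A B C : ℝ × ℝ) (h : ℝ) :
    det3 (A, g A) (B, g B) (C, h + g C) = det2 A B * h := by
  have hg (z : ℝ × ℝ) : g z = z.1 * g (1, 0) + z.2 * g (0, 1) := by
    calc g z = g (z.1 • (1, 0) + z.2 • (0, 1)) := by congr 1; ext <;> simp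
      _ = z.1 * g (1, 0) + z.2 * g (0, 1) := by simp only [map_add, map_smul, smul_eq_mul]
  simp only [det3, det2, hg A, hg B, hg C]
  ring

/-- For `q(u,v) = (p(u,v), f(p(u,v)))` one has
`[q_u,q_v,q_uu] = [p_u,p_v] · D²f(p_u,p_u)`, `[q_u,q_v,q_uv] = [p_u,p_v] · D²f(p_u,p_v)`,
`[q_u,q_v,q_vv] = [p_u,p_v] · D²f(p_v,p_v)`. -/
theorem statement0 (V : Set (ℝ × ℝ)) (hV : IsOpen V)
    (p : ℝ × ℝ → ℝ × ℝ) (hp : ContDiffOn ℝ 2 p V)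
    (f : ℝ × ℝ → ℝ) (hf : ContDiff ℝ 2 f) :
    ∀ w ∈ V,
      det3 (Du (fun x => (p x, f (p x))) w) (Dv (fun x => (p x, f (p x))) w)
          (Du (Du (fun x => (p x, f (p x)))) w)
        = det2 (Du p w) (Dv p w) * hess f (p w) (Du p w) (Du p w) ∧
      det3 (Du (fun x => (p x, f (p x))) w) (Dv (fun x => (p x, f (p x))) w)
          (Dv (Du (fun x => (p x, f (p x)))) w)
        = det2 (Du p w) (Dv p w) * hess f (p w) (Du p w) (Dv p w) ∧
      det3 (Du (fun x => (p x, f (p x))) w) (Dv (fun x => (p x, f (p x))) w)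
          (Dv (Dv (fun x => (p x, f (p x)))) w)
        = det2 (Du p w) (Dv p w) * hess f (p w) (Dv p w) (Dv p w) := by
  intro w hw
  have hpw : ContDiffAt ℝ 2 p w := hp.contDiffAt (hV.mem_nhds hw)
  have hfp : ContDiffAt ℝ 2 f (p w) := hf.contDiffAt
  have hsymm : hess f (p w) (Dv p w) (Du p w) = hess f (p w) (Du p w) (Dv p w) :=
    hfp.isSymmSndFDerivAt (by simp) _ _
  unfold Du Dv hess at hsymm ⊢
  simp only [fderiv_prodMk_comp_apply (hpw.differentiableAt two_ne_zero)
    (hfp.differentiableAt two_ne_zero), fderiv_fderiv_prodMk_comp_apply hpw hfp, hsymm,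
    det3_prodMk_apply_add, and_self]
end
end

section
/- Let C : I → ℝ² be a C¹ plane curve on an open interval I, let D ⊂ ℝ² be open, and let u, v : D → I be differentiable functions such that C(u(p)) + C(v(p)) = 2p for all p ∈ D and [C'(u(p)), C'(v(p))] ≠ 0 on D. Then for every p ∈ D, ∇u(p) = −2·R·C'(v(p)) / [C'(u(p)), C'(v(p))] and ∇v(p) = 2·R·C'(u(p)) / [C'(u(p)), C'(v(p))]. -/
noncomputable section

/-- Counterclockwise rotation by 90 degrees: `R(x,y) = (−y, x)`. -/
def rot (X : ℝ × ℝ) : ℝ × ℝ := (-X.2, X.1)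

/-- Gradient of `f : ℝ² → ℝ`. -/
def grad (f : ℝ × ℝ → ℝ) (p : ℝ × ℝ) : ℝ × ℝ :=
  (fderiv ℝ f p (1, 0), fderiv ℝ f p (0, 1))

/-! Differentiating `C ∘ u + C ∘ v = 2 • id` gives `du(w) C'(u) + dv(w) C'(v) = 2w` for every
direction `w`; when `C'(u), C'(v)` are independent, Cramer's rule solves this system for the
partial derivatives of `u` and `v`. -/

open Filter Topology

theorem fderiv_smul_add_fderiv_smul_eq_of_chord {𝕜 E : Type*} [NontriviallyNormedField 𝕜]
    [NormedAddCommGroup E] [NormedSpace 𝕜 E] {C : 𝕜 → E} {u v : E → 𝕜} {p : E} {A B : E}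
    (hCu : HasDerivAt C A (u p)) (hCv : HasDerivAt C B (v p))
    (hu : DifferentiableAt 𝕜 u p) (hv : DifferentiableAt 𝕜 v p)
    (hchord : ∀ᶠ q in 𝓝 p, C (u q) + C (v q) = (2 : 𝕜) • q) (w : E) :
    fderiv 𝕜 u p w • A + fderiv 𝕜 v p w • B = (2 : 𝕜) • w := by
  have hsum : HasFDerivAt (fun q => C (u q) + C (v q))
      ((ContinuousLinearMap.smulRight (1 : 𝕜 →L[𝕜] 𝕜) A).comp (fderiv 𝕜 u p) +
        (ContinuousLinearMap.smulRight (1 : 𝕜 →L[𝕜] 𝕜) B).comp (fderiv 𝕜 v p)) p :=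
    (hCu.hasFDerivAt.comp p hu.hasFDerivAt).add (hCv.hasFDerivAt.comp p hv.hasFDerivAt)
  have htwice : HasFDerivAt (fun q : E => (2 : 𝕜) • q)
      ((2 : 𝕜) • ContinuousLinearMap.id 𝕜 E) p :=
    (hasFDerivAt_id p).const_smul (2 : 𝕜)
  have heq := (hsum.congr_of_eventuallyEq (hchord.mono fun _ hq => hq.symm)).unique htwice
  simpa using DFunLike.congr_fun heq w

theorem det2_eq_mul_of_smul_add_smul_eq {A B w : ℝ × ℝ} {a b : ℝ} (h : a • A + b • B = w) :
    det2 w B = a * det2 A B ∧ det2 A w = b * det2 A B := by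
  subst h
  constructor <;> simp only [det2, Prod.fst_add, Prod.snd_add, Prod.smul_fst, Prod.smul_snd,
    smul_eq_mul] <;> ring

theorem coords_eq_of_forall_smul_add_smul_eq_two_smul {A B : ℝ × ℝ} (hd : det2 A B ≠ 0)
    {f g : ℝ × ℝ → ℝ} (h : ∀ w, f w • A + g w • B = (2 : ℝ) • w) :
    (f (1, 0), f (0, 1)) = (-2 / det2 A B) • rot B ∧
      (g (1, 0), g (0, 1)) = (2 / det2 A B) • rot A := by
  obtain ⟨hf₁, hg₁⟩ := det2_eq_mul_of_smul_add_smul_eq (h (1, 0))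
  obtain ⟨hf₂, hg₂⟩ := det2_eq_mul_of_smul_add_smul_eq (h (0, 1))
  simp only [det2, Prod.smul_mk, smul_eq_mul, mul_one, mul_zero] at hf₁ hg₁ hf₂ hg₂ hd
  refine ⟨Prod.ext ?_ ?_, Prod.ext ?_ ?_⟩ <;>
    simp only [det2, rot, Prod.smul_mk, smul_eq_mul] <;> field_simp <;> linarith

/-- If `C(u(p)) + C(v(p)) = 2p` on `D` and `[C'(u(p)), C'(v(p))] ≠ 0`, then
`∇u(p) = −2·R·C'(v(p)) / [C'(u(p)), C'(v(p))]` and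
`∇v(p) = 2·R·C'(u(p)) / [C'(u(p)), C'(v(p))]`. -/
theorem statement1 (a b : ℝ) (C : ℝ → ℝ × ℝ) (hC : ContDiffOn ℝ 1 C (Set.Ioo a b))
    (D : Set (ℝ × ℝ)) (hD : IsOpen D)
    (u v : ℝ × ℝ → ℝ)
    (hu : DifferentiableOn ℝ u D) (hv : DifferentiableOn ℝ v D)
    (humem : ∀ p ∈ D, u p ∈ Set.Ioo a b) (hvmem : ∀ p ∈ D, v p ∈ Set.Ioo a b)
    (hchord : ∀ p ∈ D, C (u p) + C (v p) = (2 : ℝ) • p)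
    (hdet : ∀ p ∈ D, det2 (deriv C (u p)) (deriv C (v p)) ≠ 0) :
    ∀ p ∈ D,
      grad u p = (-2 / det2 (deriv C (u p)) (deriv C (v p))) • rot (deriv C (v p)) ∧
      grad v p = (2 / det2 (deriv C (u p)) (deriv C (v p))) • rot (deriv C (u p)) := by
  intro p hp
  have hCdiff : ∀ t ∈ Set.Ioo a b, HasDerivAt C (deriv C t) t := fun t ht =>
    ((hC.differentiableOn one_ne_zero).differentiableAt (isOpen_Ioo.mem_nhds ht)).hasDerivAt
  exact coords_eq_of_forall_smul_add_smul_eq_two_smul (hdet p hp)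
    (fderiv_smul_add_fderiv_smul_eq_of_chord (hCdiff _ (humem p hp)) (hCdiff _ (hvmem p hp))
      (hu.differentiableAt (hD.mem_nhds hp)) (hv.differentiableAt (hD.mem_nhds hp))
      (eventually_of_mem (hD.mem_nhds hp) hchord))
end
end

section
/- Let C : I → ℝ² be a C² plane curve on an open interval I, let D ⊂ ℝ² be open, and let u, v : D → I be differentiable functions such that C(u(p)) + C(v(p)) = 2p for all p ∈ D and [C'(u(p)), C'(v(p))] ≠ 0 on D. Define f : D → ℝ by f(p) = (1/4)·∫_{u(p)}^{v(p)} [C(s) − p, C'(s)] ds. Then f is differentiable and ∇f(p) = R( (C(v(p)) − C(u(p)))/2 ) for every p ∈ D. -/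
/-!
Since `[C(s) - p, C'(s)] = [C(s), C'(s)] - [p, C'(s)]` and the last term integrates to
`[p, C(v) - C(u)]`, near a point of `D` the function `f` equals
`¼ (G ∘ v - G ∘ u - [p, C ∘ v - C ∘ u])` for an antiderivative `G` of `[C, C']`.
Differentiating the chord relation gives `C'(u) du + C'(v) dv = 2 · id`, and with it all terms
involving `du` and `dv` in the derivative of this expression collapse to `[w, ·]`,
`w = (C(v) - C(u))/2`, whose gradient is `R w`.
-/

noncomputable section

open MeasureTheory Set Filter Topology

def detL (w : ℝ × ℝ) : (ℝ × ℝ) →L[ℝ] ℝ :=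
  w.1 • ContinuousLinearMap.snd ℝ ℝ ℝ - w.2 • ContinuousLinearMap.fst ℝ ℝ ℝ

@[simp]
theorem detL_apply (w X : ℝ × ℝ) : detL w X = det2 w X := by
  simp [detL, det2, mul_comm]

theorem HasFDerivAt.det2 {E : Type*} [NormedAddCommGroup E] [NormedSpace ℝ E]
    {f g : E → ℝ × ℝ} {f' g' : E →L[ℝ] ℝ × ℝ} {x : E}
    (hf : HasFDerivAt f f' x) (hg : HasFDerivAt g g' x) :
    HasFDerivAt (fun y => det2 (f y) (g y))
      ((detL (f x)).comp g' - (detL (g x)).comp f') x := by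
  refine ((hf.fst.mul hg.snd).sub (hf.snd.mul hg.fst)).congr_fderiv ?_
  ext h
  simp only [sub_apply, add_apply, smul_apply,
    ContinuousLinearMap.comp_apply, ContinuousLinearMap.coe_fst',
    ContinuousLinearMap.coe_snd', smul_eq_mul, detL_apply, _root_.det2]
  ring

theorem grad_eq_rot_of_hasFDerivAt {f : ℝ × ℝ → ℝ} {p w : ℝ × ℝ}
    (hf : HasFDerivAt f (detL w) p) : grad f p = rot w := by
  simp [grad, hf.fderiv, rot, det2]

theorem hasDerivAt_integral_of_continuousOn {E : Type*} [NormedAddCommGroup E] [NormedSpace ℝ E]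
    [CompleteSpace E] {φ : ℝ → E} {s : Set ℝ} [s.OrdConnected] (hs : IsOpen s)
    (hφ : ContinuousOn φ s) {c x : ℝ} (hc : c ∈ s) (hx : x ∈ s) :
    HasDerivAt (fun y => ∫ t in c..y, φ t) (φ x) x :=
  intervalIntegral.integral_hasDerivAt_right
    ((hφ.mono (‹s.OrdConnected›.uIcc_subset hc hx)).intervalIntegrable)
    (hφ.stronglyMeasurableAtFilter hs x hx) (hφ.continuousAt (hs.mem_nhds hx))

theorem integral_det2_sub_left {C C' : ℝ → ℝ × ℝ} {x y : ℝ}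
    (hC : ∀ t ∈ uIcc x y, HasDerivAt C (C' t) t) (hC' : ContinuousOn C' (uIcc x y))
    (p : ℝ × ℝ) :
    ∫ s in x..y, det2 (C s - p) (C' s)
      = (∫ s in x..y, det2 (C s) (C' s)) - det2 p (C y - C x) := by
  have hCcont : ContinuousOn C (uIcc x y) := fun t ht => (hC t ht).continuousAt.continuousWithinAt
  have hC'int : IntervalIntegrable C' volume x y := hC'.intervalIntegrable
  have hdet_int : IntervalIntegrable (fun s => det2 (C s) (C' s)) volume x y :=
    ((hCcont.fst.mul hC'.snd).sub (hCcont.snd.mul hC'.fst)).intervalIntegrable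
  have hlin_int : IntervalIntegrable (fun s => detL p (C' s)) volume x y :=
    ((detL p).continuous.comp_continuousOn hC').intervalIntegrable
  calc ∫ s in x..y, det2 (C s - p) (C' s)
      = ∫ s in x..y, (det2 (C s) (C' s) - detL p (C' s)) :=
        intervalIntegral.integral_congr fun s _ => by
          simp only [det2, Prod.fst_sub, Prod.snd_sub, detL_apply]; ring
    _ = (∫ s in x..y, det2 (C s) (C' s)) - detL p (∫ s in x..y, C' s) := by
        rw [intervalIntegral.integral_sub hdet_int hlin_int,
          (detL p).intervalIntegral_comp_comm hC'int]
    _ = (∫ s in x..y, det2 (C s) (C' s)) - det2 p (C y - C x) := by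
        rw [intervalIntegral.integral_eq_sub_of_hasDerivAt hC hC'int, detL_apply]

theorem det2_chord_identity {P Q p X Y h : ℝ × ℝ} {a b : ℝ} (hPQ : P + Q = (2 : ℝ) • p)
    (hXY : a • X + b • Y = (2 : ℝ) • h) :
    4⁻¹ * (b * det2 Q Y - a * det2 P X - (b * det2 p Y - a * det2 p X - det2 (Q - P) h))
      = det2 ((2⁻¹ : ℝ) • (Q - P)) h := by
  obtain ⟨hPQ₁, hPQ₂⟩ := Prod.ext_iff.mp hPQ
  obtain ⟨hXY₁, hXY₂⟩ := Prod.ext_iff.mp hXY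
  simp only [Prod.fst_add, Prod.snd_add, Prod.smul_fst, Prod.smul_snd, smul_eq_mul]
    at hPQ₁ hPQ₂ hXY₁ hXY₂
  simp only [det2, Prod.fst_sub, Prod.snd_sub, Prod.smul_fst, Prod.smul_snd, smul_eq_mul]
  linear_combination (b * Y.2 - a * X.2) / 8 * hPQ₁ - (b * Y.1 - a * X.1) / 8 * hPQ₂
    - (Q.2 - P.2) / 8 * hXY₁ + (Q.1 - P.1) / 8 * hXY₂

theorem hasFDerivAt_chord_area {Γ Γ' : ℝ → ℝ × ℝ} {G : ℝ → ℝ} {u v : ℝ × ℝ → ℝ}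
    {u' v' : (ℝ × ℝ) →L[ℝ] ℝ} {p : ℝ × ℝ}
    (hΓu : HasDerivAt Γ (Γ' (u p)) (u p)) (hΓv : HasDerivAt Γ (Γ' (v p)) (v p))
    (hGu : HasDerivAt G (det2 (Γ (u p)) (Γ' (u p))) (u p))
    (hGv : HasDerivAt G (det2 (Γ (v p)) (Γ' (v p))) (v p))
    (hu : HasFDerivAt u u' p) (hv : HasFDerivAt v v' p)
    (hchord : ∀ᶠ q in 𝓝 p, Γ (u q) + Γ (v q) = (2 : ℝ) • q) :
    HasFDerivAt (fun q => 4⁻¹ * (G (v q) - G (u q) - det2 q (Γ (v q) - Γ (u q))))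
      (detL ((2⁻¹ : ℝ) • (Γ (v p) - Γ (u p)))) p := by
  have hΓu' := hΓu.hasFDerivAt.comp p hu
  have hΓv' := hΓv.hasFDerivAt.comp p hv
  have hchord' : ∀ h, u' h • Γ' (u p) + v' h • Γ' (v p) = (2 : ℝ) • h := by
    have h2 : HasFDerivAt (fun q : ℝ × ℝ => (2 : ℝ) • q)
        ((2 : ℝ) • ContinuousLinearMap.id ℝ _) p :=
      (hasFDerivAt_id p).const_smul (2 : ℝ)
    intro h
    simpa using congrArg (· h) ((hΓu'.add hΓv').unique (h2.congr_of_eventuallyEq hchord))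
  refine ((((hGv.hasFDerivAt.comp p hv).sub (hGu.hasFDerivAt.comp p hu)).sub
    ((hasFDerivAt_id p).det2 (hΓv'.sub hΓu'))).const_mul 4⁻¹).congr_fderiv ?_
  refine ContinuousLinearMap.ext fun h => ?_
  rw [detL_apply, ← det2_chord_identity hchord.self_of_nhds (hchord' h)]
  simp

theorem statement2_general (a b : ℝ) (C : ℝ → ℝ × ℝ) (hC : ContDiffOn ℝ 2 C (Set.Ioo a b))
    (D : Set (ℝ × ℝ)) (hD : IsOpen D)
    (u v : ℝ × ℝ → ℝ)
    (hu : DifferentiableOn ℝ u D) (hv : DifferentiableOn ℝ v D)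
    (humem : ∀ p ∈ D, u p ∈ Set.Ioo a b) (hvmem : ∀ p ∈ D, v p ∈ Set.Ioo a b)
    (hchord : ∀ p ∈ D, C (u p) + C (v p) = (2 : ℝ) • p)
    (f : ℝ × ℝ → ℝ)
    (hf : ∀ p ∈ D, f p = (4⁻¹ : ℝ) * ∫ s in (u p)..(v p), det2 (C s - p) (deriv C s)) :
    ∀ p ∈ D,
      DifferentiableAt ℝ f p ∧
      grad f p = rot ((2⁻¹ : ℝ) • (C (v p) - C (u p))) := by
  intro p hp
  have hpD : D ∈ 𝓝 p := hD.mem_nhds hp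
  have hI : IsOpen (Ioo a b) := isOpen_Ioo
  have hCd : ∀ t ∈ Ioo a b, HasDerivAt C (deriv C t) t := fun t ht =>
    ((hC.differentiableOn two_ne_zero t ht).differentiableAt (hI.mem_nhds ht)).hasDerivAt
  have hC' : ContinuousOn (deriv C) (Ioo a b) := hC.continuousOn_deriv_of_isOpen hI one_le_two
  have hCC' : ContinuousOn (fun s => det2 (C s) (deriv C s)) (Ioo a b) :=
    (hC.continuousOn.fst.mul hC'.snd).sub (hC.continuousOn.snd.mul hC'.fst)
  set G : ℝ → ℝ := fun y => ∫ s in u p..y, det2 (C s) (deriv C s)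
  have hG : ∀ x ∈ Ioo a b, HasDerivAt G (det2 (C x) (deriv C x)) x := fun x hx =>
    hasDerivAt_integral_of_continuousOn hI hCC' (humem p hp) hx
  have hfG : f =ᶠ[𝓝 p] fun q => 4⁻¹ * (G (v q) - G (u q) - det2 q (C (v q) - C (u q))) := by
    filter_upwards [hpD] with q hq
    have hsub : uIcc (u q) (v q) ⊆ Ioo a b :=
      ordConnected_Ioo.uIcc_subset (humem q hq) (hvmem q hq)
    rw [hf q hq, integral_det2_sub_left (fun t ht => hCd t (hsub ht)) (hC'.mono hsub),
      intervalIntegral.integral_eq_sub_of_hasDerivAt (fun t ht => hG t (hsub ht))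
        (hCC'.mono hsub).intervalIntegrable]
  have hfd : HasFDerivAt f (detL ((2⁻¹ : ℝ) • (C (v p) - C (u p)))) p :=
    (hasFDerivAt_chord_area (hCd _ (humem p hp)) (hCd _ (hvmem p hp)) (hG _ (humem p hp))
      (hG _ (hvmem p hp)) (hu.hasFDerivAt hpD) (hv.hasFDerivAt hpD)
      (eventually_of_mem hpD hchord)).congr_of_eventuallyEq hfG
  exact ⟨hfd.differentiableAt, grad_eq_rot_of_hasFDerivAt hfd⟩

/-- The area distance `f(p) = (1/4)·∫_{u(p)}^{v(p)} [C(s) − p, C'(s)] ds` is differentiable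
with `∇f(p) = R((C(v(p)) − C(u(p)))/2)`. -/
theorem statement2 (a b : ℝ) (C : ℝ → ℝ × ℝ) (hC : ContDiffOn ℝ 2 C (Set.Ioo a b))
    (D : Set (ℝ × ℝ)) (hD : IsOpen D)
    (u v : ℝ × ℝ → ℝ)
    (hu : DifferentiableOn ℝ u D) (hv : DifferentiableOn ℝ v D)
    (humem : ∀ p ∈ D, u p ∈ Set.Ioo a b) (hvmem : ∀ p ∈ D, v p ∈ Set.Ioo a b)
    (hchord : ∀ p ∈ D, C (u p) + C (v p) = (2 : ℝ) • p)
    (hdet : ∀ p ∈ D, det2 (deriv C (u p)) (deriv C (v p)) ≠ 0)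
    (f : ℝ × ℝ → ℝ)
    (hf : ∀ p ∈ D, f p = (4⁻¹ : ℝ) * ∫ s in (u p)..(v p), det2 (C s - p) (deriv C s)) :
    ∀ p ∈ D,
      DifferentiableAt ℝ f p ∧
      grad f p = rot ((2⁻¹ : ℝ) • (C (v p) - C (u p))) :=
  statement2_general a b C hC D hD u v hu hv humem hvmem hchord f hf
end
end

section
/- Let C : I → ℝ² be a C² plane curve on an open interval I, let D ⊂ ℝ² be open, and let u, v : D → I be C¹ functions such that C(u(p)) + C(v(p)) = 2p for all p ∈ D and [C'(u(p)), C'(v(p))] ≠ 0 on D (no parallel tangents at the chord endpoints). Define f : D → ℝ by f(p) = (1/4)·∫_{u(p)}^{v(p)} [C(s) − p, C'(s)] ds. Then det(D²f(p)) = −1 for every p ∈ D, where D²f denotes the Hessian matrix of f. In particular the graph of the area distance f is an indefinite improper affine sphere. -/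
/-!
Differentiating under the integral sign, the boundary terms combine through the chord condition
`C(u) + C(v) = 2p` and its derivative `u'·C'(u) + v'·C'(v) = 2·id`, so that
`Df(p) h = ½ [C(v) - C(u), h]`: the gradient of `f` is the chord rotated by a quarter turn `J`.
Hence `D²f = ½ J (B - A)` with the rank-one maps `A = C'(u) ⊗ Du`, `B = C'(v) ⊗ Dv`, and as
`A + B = 2·id`, `det (B - A) = -det (A + B) = -4`, i.e. `det D²f = -1`.
-/

noncomputable section

/-- Determinant of the Hessian matrix of `f` at `p`. -/
def hessDet (f : ℝ × ℝ → ℝ) (p : ℝ × ℝ) : ℝ :=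
  hess f p (1, 0) (1, 0) * hess f p (0, 1) (0, 1)
    - hess f p (1, 0) (0, 1) * hess f p (0, 1) (1, 0)

open Set Filter Topology ContinuousLinearMap

def det2CLM : ℝ × ℝ →L[ℝ] ℝ × ℝ →L[ℝ] ℝ :=
  (fst ℝ ℝ ℝ).smulRight (snd ℝ ℝ ℝ) - (snd ℝ ℝ ℝ).smulRight (fst ℝ ℝ ℝ)

@[simp]
lemma det2CLM_apply (X Y : ℝ × ℝ) : det2CLM X Y = det2 X Y := by
  simp [det2CLM, det2, mul_comm]

lemma det2_sub_smul_eq_neg (a₁ a₂ b₁ b₂ : ℝ) (X Y : ℝ × ℝ) :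
    det2 (b₁ • Y - a₁ • X) (b₂ • Y - a₂ • X) = -det2 (a₁ • X + b₁ • Y) (a₂ • X + b₂ • Y) := by
  simp only [det2, Prod.fst_sub, Prod.snd_sub, Prod.fst_add, Prod.snd_add, Prod.smul_fst,
    Prod.smul_snd, smul_eq_mul]
  ring

lemma hessDet_eq_of_fderiv_eventuallyEq {f : ℝ × ℝ → ℝ} {w : ℝ × ℝ → ℝ × ℝ}
    {w' : ℝ × ℝ →L[ℝ] ℝ × ℝ} {p : ℝ × ℝ}
    (hf : ∀ᶠ q in 𝓝 p, fderiv ℝ f q = (2⁻¹ : ℝ) • det2CLM (w q)) (hw : HasFDerivAt w w' p) :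
    hessDet f p = 4⁻¹ * det2 (w' (1, 0)) (w' (0, 1)) := by
  have hf' : fderiv ℝ (fderiv ℝ f) p = (2⁻¹ : ℝ) • det2CLM.comp w' :=
    (((det2CLM.hasFDerivAt.comp p hw).const_smul (2⁻¹ : ℝ)).congr_of_eventuallyEq hf).fderiv
  simp only [hessDet, hess, hf', smul_apply, comp_apply, smul_eq_mul, det2CLM_apply, det2]
  ring

theorem hasFDerivAt_intervalIntegral_comp {E F : Type*} [NormedAddCommGroup E] [NormedSpace ℝ E]
    [NormedAddCommGroup F] [NormedSpace ℝ F] [CompleteSpace F] {g : ℝ → F} {I : Set ℝ}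
    (hI : IsOpen I) [I.OrdConnected] (hg : ContinuousOn g I) {u v : E → ℝ} {u' v' : E →L[ℝ] ℝ}
    {q : E} (hu : HasFDerivAt u u' q) (hv : HasFDerivAt v v' q) (huI : u q ∈ I) (hvI : v q ∈ I) :
    HasFDerivAt (fun x => ∫ s in u x..v x, g s)
      (v'.smulRight (g (v q)) - u'.smulRight (g (u q))) q := by
  have hint := intervalIntegral.integral_hasFDerivAt
    ((hg.mono (Set.OrdConnected.uIcc_subset ‹_› huI hvI)).intervalIntegrable)
    (hg.stronglyMeasurableAtFilter hI _ huI) (hg.stronglyMeasurableAtFilter hI _ hvI)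
    (hg.continuousAt (hI.mem_nhds huI)) (hg.continuousAt (hI.mem_nhds hvI))
  refine (hint.comp q (hu.prodMk hv)).congr_fderiv ?_
  ext h
  simp

def areaDistance (C : ℝ → ℝ × ℝ) (u v : ℝ × ℝ → ℝ) (p : ℝ × ℝ) : ℝ :=
  4⁻¹ * ∫ s in u p..v p, det2 (C s - p) (deriv C s)

section Curve

variable {C : ℝ → ℝ × ℝ} {I : Set ℝ}

theorem ContDiffOn.hasDerivAt_deriv_of_isOpen (hC : ContDiffOn ℝ 1 C I) (hI : IsOpen I) {t : ℝ}
    (ht : t ∈ I) : HasDerivAt C (deriv C t) t :=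
  ((hC.contDiffAt (hI.mem_nhds ht)).differentiableAt one_ne_zero).hasDerivAt

theorem ContDiffOn.hasFDerivAt_comp_of_isOpen (hC : ContDiffOn ℝ 1 C I) (hI : IsOpen I)
    {E : Type*} [NormedAddCommGroup E] [NormedSpace ℝ E] {u : E → ℝ} {q : E}
    (hu : DifferentiableAt ℝ u q) (huI : u q ∈ I) :
    HasFDerivAt (fun x => C (u x)) ((fderiv ℝ u q).smulRight (deriv C (u q))) q :=
  ((hC.hasDerivAt_deriv_of_isOpen hI huI).hasFDerivAt.comp q hu.hasFDerivAt).congr_fderiv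
    (by ext h <;> simp)

theorem ContDiffOn.continuousOn_det2_deriv (hC : ContDiffOn ℝ 1 C I) (hI : IsOpen I) :
    ContinuousOn (fun s => det2 (C s) (deriv C s)) I := by
  have hC' := hC.continuousOn_deriv_of_isOpen hI le_rfl
  have hC := hC.continuousOn
  simp only [det2]
  fun_prop

theorem integral_det2_sub_eq (hC : ContDiffOn ℝ 1 C I) (hI : IsOpen I) [I.OrdConnected]
    {x y : ℝ} (hx : x ∈ I) (hy : y ∈ I) (q : ℝ × ℝ) :
    ∫ s in x..y, det2 (C s - q) (deriv C s)
      = (∫ s in x..y, det2 (C s) (deriv C s)) - det2 q (C y - C x) := by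
  have hxy : Set.uIcc x y ⊆ I := Set.OrdConnected.uIcc_subset ‹_› hx hy
  have hC' : ContinuousOn (deriv C) (Set.uIcc x y) :=
    (hC.continuousOn_deriv_of_isOpen hI le_rfl).mono hxy
  have hFTC : ∫ s in x..y, deriv C s = C y - C x :=
    intervalIntegral.integral_deriv_eq_sub
      (fun s hs => (hC.hasDerivAt_deriv_of_isOpen hI (hxy hs)).differentiableAt)
      hC'.intervalIntegrable
  have hsplit : ∀ s,
      det2 (C s - q) (deriv C s) = det2 (C s) (deriv C s) - det2CLM q (deriv C s) := by
    intro s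
    simp only [det2CLM_apply, det2, Prod.fst_sub, Prod.snd_sub]
    ring
  simp_rw [hsplit]
  rw [intervalIntegral.integral_sub, ← det2CLM_apply, ← hFTC,
    (det2CLM q).intervalIntegral_comp_comm hC'.intervalIntegrable]
  · exact (hC.continuousOn_det2_deriv hI |>.mono hxy).intervalIntegrable
  · exact ((det2CLM q).continuous.comp_continuousOn hC').intervalIntegrable

variable {u v : ℝ × ℝ → ℝ} {q : ℝ × ℝ}

theorem fderiv_smul_deriv_add_eq_two_smul (hC : ContDiffOn ℝ 1 C I) (hI : IsOpen I)
    (hu : DifferentiableAt ℝ u q) (hv : DifferentiableAt ℝ v q) (huI : u q ∈ I) (hvI : v q ∈ I)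
    (hchord : ∀ᶠ x in 𝓝 q, C (u x) + C (v x) = (2 : ℝ) • x) (h : ℝ × ℝ) :
    fderiv ℝ u q h • deriv C (u q) + fderiv ℝ v q h • deriv C (v q) = (2 : ℝ) • h := by
  have hsum := ((hC.hasFDerivAt_comp_of_isOpen hI hu huI).add
    (hC.hasFDerivAt_comp_of_isOpen hI hv hvI)).congr_of_eventuallyEq (hchord.mono fun _ => Eq.symm)
  simpa using congrArg (· h) (hsum.unique ((hasFDerivAt_id q).const_smul (2 : ℝ)))

theorem hasFDerivAt_areaDistance (hC : ContDiffOn ℝ 1 C I) (hI : IsOpen I) [I.OrdConnected]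
    (hu : DifferentiableAt ℝ u q) (hv : DifferentiableAt ℝ v q) (huI : u q ∈ I) (hvI : v q ∈ I)
    (hchord : ∀ᶠ x in 𝓝 q, C (u x) + C (v x) = (2 : ℝ) • x) :
    HasFDerivAt (areaDistance C u v) ((2⁻¹ : ℝ) • det2CLM (C (v q) - C (u q))) q := by
  have hloc : areaDistance C u v =ᶠ[𝓝 q] fun x =>
      4⁻¹ * ((∫ s in u x..v x, det2 (C s) (deriv C s)) - det2CLM x (C (v x) - C (u x))) := by
    filter_upwards [hu.continuousAt.preimage_mem_nhds (hI.mem_nhds huI),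
      hv.continuousAt.preimage_mem_nhds (hI.mem_nhds hvI)] with x hux hvx
    rw [areaDistance, integral_det2_sub_eq hC hI hux hvx, det2CLM_apply]
  have hderiv := ((hasFDerivAt_intervalIntegral_comp hI (hC.continuousOn_det2_deriv hI)
    hu.hasFDerivAt hv.hasFDerivAt huI hvI).sub (det2CLM.hasFDerivAt.clm_apply
    ((hC.hasFDerivAt_comp_of_isOpen hI hv hvI).sub
      (hC.hasFDerivAt_comp_of_isOpen hI hu huI)))).const_mul (4⁻¹ : ℝ)
  refine (hderiv.congr_of_eventuallyEq hloc).congr_fderiv (ContinuousLinearMap.ext fun h => ?_)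
  obtain ⟨hmid₁, hmid₂⟩ := Prod.ext_iff.1 hchord.self_of_nhds
  obtain ⟨htan₁, htan₂⟩ :=
    Prod.ext_iff.1 (fderiv_smul_deriv_add_eq_two_smul hC hI hu hv huI hvI hchord h)
  simp only [Prod.fst_add, Prod.snd_add, Prod.smul_fst, Prod.smul_snd, smul_eq_mul]
    at hmid₁ hmid₂ htan₁ htan₂
  simp only [det2, comp_sub, Pi.sub_apply, map_sub, smul_apply, sub_apply, smulRight_apply,
    smul_eq_mul, add_apply, comp_apply, map_smul, det2CLM_apply, flip_apply]
  set a := fderiv ℝ u q h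
  set b := fderiv ℝ v q h
  -- As `C (u q) - q = q - C (v q)`, the boundary terms add up to
  -- `½ [C (v q) - C (u q), a • C' (u q) + b • C' (v q)] = [C (v q) - C (u q), h]`.
  linear_combination (8⁻¹ : ℝ) * (((C (v q)).1 - (C (u q)).1) * htan₂
    - ((C (v q)).2 - (C (u q)).2) * htan₁
    + (b * (deriv C (v q)).2 - a * (deriv C (u q)).2) * hmid₁
    - (b * (deriv C (v q)).1 - a * (deriv C (u q)).1) * hmid₂)

end Curve

theorem statement4_general (a b : ℝ) (C : ℝ → ℝ × ℝ) (hC : ContDiffOn ℝ 2 C (Set.Ioo a b))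
    (D : Set (ℝ × ℝ)) (hD : IsOpen D)
    (u v : ℝ × ℝ → ℝ)
    (hu : ContDiffOn ℝ 1 u D) (hv : ContDiffOn ℝ 1 v D)
    (humem : ∀ p ∈ D, u p ∈ Set.Ioo a b) (hvmem : ∀ p ∈ D, v p ∈ Set.Ioo a b)
    (hchord : ∀ p ∈ D, C (u p) + C (v p) = (2 : ℝ) • p)
    (f : ℝ × ℝ → ℝ)
    (hf : ∀ p ∈ D, f p = (4⁻¹ : ℝ) * ∫ s in (u p)..(v p), det2 (C s - p) (deriv C s)) :
    ∀ p ∈ D, hessDet f p = -1 := by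
  have hC1 : ContDiffOn ℝ 1 C (Set.Ioo a b) := hC.of_le one_le_two
  have hu' : ∀ q ∈ D, DifferentiableAt ℝ u q := fun q hq =>
    (hu.differentiableOn one_ne_zero).differentiableAt (hD.mem_nhds hq)
  have hv' : ∀ q ∈ D, DifferentiableAt ℝ v q := fun q hq =>
    (hv.differentiableOn one_ne_zero).differentiableAt (hD.mem_nhds hq)
  have hchord' : ∀ q ∈ D, ∀ᶠ x in 𝓝 q, C (u x) + C (v x) = (2 : ℝ) • x := fun q hq =>
    eventually_of_mem (hD.mem_nhds hq) hchord
  intro p hp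
  have hfderiv : ∀ᶠ q in 𝓝 p, fderiv ℝ f q = (2⁻¹ : ℝ) • det2CLM (C (v q) - C (u q)) := by
    filter_upwards [hD.mem_nhds hp] with q hq
    exact ((hasFDerivAt_areaDistance hC1 isOpen_Ioo (hu' q hq) (hv' q hq) (humem q hq)
      (hvmem q hq) (hchord' q hq)).congr_of_eventuallyEq
      (eventually_of_mem (hD.mem_nhds hq) hf)).fderiv
  rw [hessDet_eq_of_fderiv_eventuallyEq hfderiv
    ((hC1.hasFDerivAt_comp_of_isOpen isOpen_Ioo (hv' p hp) (hvmem p hp)).sub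
      (hC1.hasFDerivAt_comp_of_isOpen isOpen_Ioo (hu' p hp) (humem p hp)))]
  have htan := fderiv_smul_deriv_add_eq_two_smul hC1 isOpen_Ioo (hu' p hp) (hv' p hp)
    (humem p hp) (hvmem p hp) (hchord' p hp)
  simp only [sub_apply, smulRight_apply]
  rw [det2_sub_smul_eq_neg, htan, htan]
  norm_num [det2]

/-- The area distance `f(p) = (1/4)·∫_{u(p)}^{v(p)} [C(s) − p, C'(s)] ds` satisfies
the Monge–Ampère equation `det(D²f) = −1` on `D`: its graph is an indefinite improper
affine sphere. -/
theorem statement4 (a b : ℝ) (C : ℝ → ℝ × ℝ) (hC : ContDiffOn ℝ 2 C (Set.Ioo a b))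
    (D : Set (ℝ × ℝ)) (hD : IsOpen D)
    (u v : ℝ × ℝ → ℝ)
    (hu : ContDiffOn ℝ 1 u D) (hv : ContDiffOn ℝ 1 v D)
    (humem : ∀ p ∈ D, u p ∈ Set.Ioo a b) (hvmem : ∀ p ∈ D, v p ∈ Set.Ioo a b)
    (hchord : ∀ p ∈ D, C (u p) + C (v p) = (2 : ℝ) • p)
    (hdet : ∀ p ∈ D, det2 (deriv C (u p)) (deriv C (v p)) ≠ 0)
    (f : ℝ × ℝ → ℝ)
    (hf : ∀ p ∈ D, f p = (4⁻¹ : ℝ) * ∫ s in (u p)..(v p), det2 (C s - p) (deriv C s)) :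
    ∀ p ∈ D, hessDet f p = -1 :=
  statement4_general a b C hC D hD u v hu hv humem hvmem hchord f hf
end
end

section
/- Let H be a real symmetric 2×2 matrix and let a, b ∈ ℝ² be vectors such that aᵀ·H·a = 0, bᵀ·H·b = 0, and aᵀ·H·b = [a,b] ≠ 0. Then H·a = R·a, H·b = −R·b, and det H = −1. -/
noncomputable section

open Matrix

/-- If `H` is symmetric with `aᵀHa = 0`, `bᵀHb = 0` and `aᵀHb = [a,b] ≠ 0`, then
`H·a = R·a`, `H·b = −R·b` and `det H = −1`, where `R = !![0,-1;1,0]` is rotation by 90°. -/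
theorem statement5 (H : Matrix (Fin 2) (Fin 2) ℝ) (hH : H.IsSymm)
    (a b : Fin 2 → ℝ)
    (ha : a ⬝ᵥ H.mulVec a = 0) (hb : b ⬝ᵥ H.mulVec b = 0)
    (hab : a ⬝ᵥ H.mulVec b = a 0 * b 1 - a 1 * b 0)
    (hne : a 0 * b 1 - a 1 * b 0 ≠ 0) :
    H.mulVec a = (!![0, -1; 1, 0] : Matrix (Fin 2) (Fin 2) ℝ).mulVec a ∧
    H.mulVec b = -((!![0, -1; 1, 0] : Matrix (Fin 2) (Fin 2) ℝ).mulVec b) ∧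
    H.det = -1 := by
  have hq : H 1 0 = H 0 1 := hH.apply 0 1
  simp only [Matrix.mulVec, dotProduct, Fin.sum_univ_two] at ha hb hab
  rw [hq] at ha hb hab
  set p := H 0 0 with hp
  set q := H 0 1 with hqq
  set r := H 1 1 with hr
  set a0 := a 0; set a1 := a 1; set b0 := b 0; set b1 := b 1
  have D := a0 * b1 - a1 * b0
  -- component equations
  have e1 : p * a0 + q * a1 = -a1 := by
    have h : (a0 * b1 - a1 * b0) * (p * a0 + q * a1 + a1) = 0 := by
      linear_combination b1 * ha - a1 * hab
    rcases mul_eq_zero.mp h with h | h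
    · exact absurd h hne
    · linarith
  have e2 : q * a0 + r * a1 = a0 := by
    have h : (a0 * b1 - a1 * b0) * (q * a0 + r * a1 - a0) = 0 := by
      linear_combination a0 * hab - b0 * ha
    rcases mul_eq_zero.mp h with h | h
    · exact absurd h hne
    · linarith
  have e3 : p * b0 + q * b1 = b1 := by
    have h : (a0 * b1 - a1 * b0) * (p * b0 + q * b1 - b1) = 0 := by
      linear_combination b1 * hab - a1 * hb
    rcases mul_eq_zero.mp h with h | h
    · exact absurd h hne
    · linarith
  have e4 : q * b0 + r * b1 = -b0 := by
    have h : (a0 * b1 - a1 * b0) * (q * b0 + r * b1 + b0) = 0 := by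
      linear_combination a0 * hb - b0 * hab
    rcases mul_eq_zero.mp h with h | h
    · exact absurd h hne
    · linarith
  refine ⟨?_, ?_, ?_⟩
  · funext i
    fin_cases i <;>
      simp [Matrix.mulVec, dotProduct, Fin.sum_univ_two, hq] <;>
      linarith [e1, e2]
  · funext i
    fin_cases i <;>
      simp [Matrix.mulVec, dotProduct, Fin.sum_univ_two, hq] <;>
      linarith [e3, e4]
  · rw [Matrix.det_fin_two, hq]
    have h : (a0 * b1 - a1 * b0) * (p * r - q * q + 1) = 0 := by
      linear_combination (q * b0 + r * b1) * e1 - (p * b0 + q * b1) * e2 - a0 * e3 - a1 * e4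
    rcases mul_eq_zero.mp h with h | h
    · exact absurd h hne
    · linarith
end
end

section
/- Let c₀, c₁, …, c_{N−1} ∈ ℝ² be the vertices of a convex polygon, set L_i = (c_{i+1} − c_i)/2. For integers 0 ≤ i ≤ j ≤ N−1 define p(i,j) = (c_i + c_j)/2, f(i,j) = Σ_{i ≤ k < l ≤ j−1} [L_k, L_l], and q(i,j) = (p(i,j), f(i,j)) ∈ ℝ³. Then for every admissible (i,j), q(i,j) + q(i+1,j+1) − q(i+1,j) − q(i,j+1) = (0, 0, −[L_i, L_j]); in particular this vector is parallel to the z-axis direction (0,0,1). -/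
noncomputable section

/-- Half-side vectors of the polygon: `L_i = (c_{i+1} − c_i)/2`. -/
def Lseg (c : ℕ → ℝ × ℝ) (i : ℕ) : ℝ × ℝ := (2⁻¹ : ℝ) • (c (i + 1) - c i)

/-- Grid points `p(i,j) = (c_i + c_j)/2`. -/
def pgrid (c : ℕ → ℝ × ℝ) (i j : ℕ) : ℝ × ℝ := (2⁻¹ : ℝ) • (c i + c j)

/-- Discrete area distance `f(i,j) = Σ_{i ≤ k < l ≤ j−1} [L_k, L_l]`. -/
def fgrid (c : ℕ → ℝ × ℝ) (i j : ℕ) : ℝ :=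
  ∑ k ∈ Finset.Ico i j, ∑ l ∈ Finset.Ico (k + 1) j, det2 (Lseg c k) (Lseg c l)

/-- The discrete improper affine sphere `q(i,j) = (p(i,j), f(i,j)) ∈ ℝ³`. -/
def qgrid (c : ℕ → ℝ × ℝ) (i j : ℕ) : (ℝ × ℝ) × ℝ := (pgrid c i j, fgrid c i j)

lemma fgrid_succ (c : ℕ → ℝ × ℝ) (i j : ℕ) (hij : i ≤ j) :
    fgrid c i (j + 1) =
      fgrid c i j + ∑ k ∈ Finset.Ico i j, det2 (Lseg c k) (Lseg c j) := by
  unfold fgrid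
  rw [Finset.sum_Ico_succ_top hij]
  have h1 : Finset.Ico (j + 1) (j + 1) = ∅ := Finset.Ico_self _
  rw [h1, Finset.sum_empty, add_zero]
  rw [← Finset.sum_add_distrib]
  apply Finset.sum_congr rfl
  intro k hk
  rw [Finset.mem_Ico] at hk
  rw [Finset.sum_Ico_succ_top hk.2]

/-- `q(i,j) + q(i+1,j+1) − q(i+1,j) − q(i,j+1) = (0, 0, −[L_i,L_j])`; in particular this
vector is parallel to `(0,0,1)`. -/
theorem statement9 (N : ℕ) (c : ℕ → ℝ × ℝ)
    (hconv : ∀ k l : ℕ, k < l → l + 1 < N → 0 < det2 (Lseg c k) (Lseg c l))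
    (i j : ℕ) (hij : i ≤ j) (hjN : j + 2 ≤ N) :
    qgrid c i j + qgrid c (i + 1) (j + 1) - qgrid c (i + 1) j - qgrid c i (j + 1)
      = (((0 : ℝ), (0 : ℝ)), -det2 (Lseg c i) (Lseg c j)) ∧
    ∃ t : ℝ,
      qgrid c i j + qgrid c (i + 1) (j + 1) - qgrid c (i + 1) j - qgrid c i (j + 1)
        = t • ((((0 : ℝ), (0 : ℝ)), (1 : ℝ)) : (ℝ × ℝ) × ℝ) := by
  have hf : fgrid c i j + fgrid c (i+1) (j+1) - fgrid c (i+1) j - fgrid c i (j+1)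
      = -det2 (Lseg c i) (Lseg c j) := by
    rcases eq_or_lt_of_le hij with rfl | hlt
    · have h0 : ∀ m : ℕ, Finset.Ico (m+1) m = (∅ : Finset ℕ) :=
        fun m => Finset.Ico_eq_empty_of_le (Nat.le_succ m)
      simp [fgrid, h0, det2]
      ring
    · have h1 : i + 1 ≤ j := hlt
      rw [fgrid_succ c i j hij, fgrid_succ c (i+1) j h1]
      have h2 : ∑ k ∈ Finset.Ico i j, det2 (Lseg c k) (Lseg c j)
          = det2 (Lseg c i) (Lseg c j)
            + ∑ k ∈ Finset.Ico (i+1) j, det2 (Lseg c k) (Lseg c j) := by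
        exact Finset.sum_eq_sum_Ico_succ_bot hlt _
      rw [h2]; ring
  have hp : pgrid c i j + pgrid c (i+1) (j+1) - pgrid c (i+1) j - pgrid c i (j+1)
      = (0, 0) := by
    simp [pgrid, Prod.ext_iff, Prod.smul_def, smul_eq_mul]
    constructor <;> ring
  have key : qgrid c i j + qgrid c (i + 1) (j + 1) - qgrid c (i + 1) j - qgrid c i (j + 1)
      = (((0 : ℝ), (0 : ℝ)), -det2 (Lseg c i) (Lseg c j)) := by
    rw [Prod.ext_iff]
    constructor
    · simpa [qgrid] using hp
    · simpa [qgrid] using hf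
  refine ⟨key, -det2 (Lseg c i) (Lseg c j), ?_⟩
  rw [key]
  simp [Prod.ext_iff, Prod.smul_def, smul_eq_mul]
end
end

section
/- Let h = (h₁, h₂) : ℤ² → ℝ² be discrete harmonic, i.e. h(m+1,n) + h(m−1,n) + h(m,n+1) + h(m,n−1) = 4·h(m,n) for all (m,n) ∈ ℤ². Then there exists a function F : ℤ² → ℝ satisfying, for all (m,n) ∈ ℤ²: F(m+1,n) − F(m,n) = −det[h(m,n−1), h(m,n)] and F(m,n+1) − F(m,n) = det[h(m−1,n), h(m,n)]. -/
noncomputable section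

/-!
Harmonicity of `h` says that `(a, b) = (-det[h(m,n-1), h(m,n)], det[h(m-1,n), h(m,n)])` is a
closed discrete 1-form: on the unit square with lower-left corner `(m,n)` the two mixed
differences differ by `det[h(m,n), Σ neighbours of h(m,n)] = det[h(m,n), 4 h(m,n)] = 0`.
On `ℤ²` every closed 1-form is exact: summing `a` along the `m`-axis and then `b` along
vertical lines gives the potential `F`.
-/

section IntPrimitive

variable {M : Type*} [AddCommGroup M]

def intPrimitive (g : ℤ → M) (k : ℤ) : M :=
  Int.inductionOn' (motive := fun _ => M) k 0 0 (fun j _ x => x + g j) (fun j _ x => x - g (j - 1))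

@[simp]
lemma intPrimitive_zero (g : ℤ → M) : intPrimitive g 0 = 0 :=
  Int.inductionOn'_self ..

lemma intPrimitive_add_one (g : ℤ → M) (k : ℤ) :
    intPrimitive g (k + 1) = intPrimitive g k + g k := by
  rcases le_or_gt 0 k with hk | hk
  · exact Int.inductionOn'_add_one hk
  · have hstep := Int.inductionOn'_sub_one (motive := fun _ => M) (b := 0) (zero := 0)
      (succ := fun j _ x => x + g j) (pred := fun j _ x => x - g (j - 1))
      (show k + 1 ≤ 0 by omega)
    rw [add_sub_cancel_right] at hstep
    simp only [intPrimitive, hstep, sub_add_cancel]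

lemma sub_apply_zero_eq_of_increments_eq {f f' : ℤ → M}
    (hf : ∀ k, f (k + 1) - f k = f' (k + 1) - f' k) (k : ℤ) :
    f k - f 0 = f' k - f' 0 := by
  induction k using Int.induction_on with
  | zero => simp
  | succ k ih => rw [← sub_add_sub_cancel _ (f k), hf, ih, sub_add_sub_cancel]
  | pred k ih =>
    have hk := hf (-k - 1)
    rw [sub_add_cancel] at hk
    rw [← sub_add_sub_cancel _ (f (-k)), ← neg_sub (f (-k)), hk, ih]
    abel

end IntPrimitive

theorem exists_potential_of_closed {M : Type*} [AddCommGroup M] (a b : ℤ → ℤ → M)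
    (hclosed : ∀ m n, b (m + 1) n - b m n = a m (n + 1) - a m n) :
    ∃ F : ℤ × ℤ → M, ∀ m n : ℤ,
      F (m + 1, n) - F (m, n) = a m n ∧ F (m, n + 1) - F (m, n) = b m n := by
  refine ⟨fun p => intPrimitive (a · 0) p.1 + intPrimitive (b p.1) p.2, fun m n => ⟨?_, ?_⟩⟩
  · have hvert : intPrimitive (b (m + 1)) n - intPrimitive (b m) n = a m n - a m 0 := by
      simpa using sub_apply_zero_eq_of_increments_eq
        (f := fun j => intPrimitive (b (m + 1)) j - intPrimitive (b m) j) (f' := a m)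
        (fun j => by simp only [intPrimitive_add_one]; rw [← hclosed]; abel) n
    simp only [intPrimitive_add_one]
    rw [sub_eq_iff_eq_add.mp hvert.symm]
    abel
  · simp only [intPrimitive_add_one]
    abel

lemma det2_closed_of_sum_eq {Z X₁ X₂ Y₁ Y₂ : ℝ × ℝ} (hsum : X₁ + X₂ + Y₁ + Y₂ = (4 : ℝ) • Z) :
    det2 Z X₁ - det2 X₂ Z = -det2 Z Y₁ - -det2 Y₂ Z := by
  obtain ⟨h₁, h₂⟩ := Prod.ext_iff.mp hsum
  simp only [Prod.fst_add, Prod.snd_add, Prod.smul_fst, Prod.smul_snd, smul_eq_mul] at h₁ h₂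
  unfold det2
  linear_combination Z.1 * h₂ - Z.2 * h₁

/-- If `h : ℤ² → ℝ²` is discrete harmonic, then there exists `F : ℤ² → ℝ` (the discrete
outer area distance) with `F(m+1,n) − F(m,n) = −det[h(m,n−1), h(m,n)]` and
`F(m,n+1) − F(m,n) = det[h(m−1,n), h(m,n)]`. -/
theorem statement15 (h : ℤ × ℤ → ℝ × ℝ)
    (hharm : ∀ m n : ℤ,
      h (m + 1, n) + h (m - 1, n) + h (m, n + 1) + h (m, n - 1) = (4 : ℝ) • h (m, n)) :
    ∃ F : ℤ × ℤ → ℝ, ∀ m n : ℤ,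
      F (m + 1, n) - F (m, n) = -det2 (h (m, n - 1)) (h (m, n)) ∧
      F (m, n + 1) - F (m, n) = det2 (h (m - 1, n)) (h (m, n)) :=
  exists_potential_of_closed _ _ fun m n => by
    simpa only [add_sub_cancel_right] using det2_closed_of_sum_eq (hharm m n)
end
end

section
/- Let h = (h₁, h₂) : ℤ² → ℝ² be discrete harmonic (h(m+1,n)+h(m−1,n)+h(m,n+1)+h(m,n−1) = 4h(m,n)), let X, Y : ℤ² → ℝ satisfy the discrete Cauchy–Riemann equations X(m+1,n) − X(m,n) = h₁(m,n) − h₁(m,n−1), X(m,n+1) − X(m,n) = −(h₁(m,n) − h₁(m−1,n)), and likewise for Y with h₂, and let F : ℤ² → ℝ satisfy F(m+1,n) − F(m,n) = −det[h(m,n−1), h(m,n)] and F(m,n+1) − F(m,n) = det[h(m−1,n), h(m,n)]. Define Q = (X, Y, F) : ℤ² → ℝ³ and the co-normal ν(m,n) = (−h₂(m,n), h₁(m,n), 1) ∈ ℝ³. Then for all (m,n): Q(m+1,n) − Q(m,n) = ν(m,n) × ν(m,n−1) and Q(m,n+1) − Q(m,n) = −ν(m,n) × ν(m−1,n), where ×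 is the cross product in ℝ³. -/
noncomputable section

/-- Cross product in ℝ³, modelled as `ℝ × ℝ × ℝ`. -/
def cross3 (a b : ℝ × ℝ × ℝ) : ℝ × ℝ × ℝ :=
  (a.2.1 * b.2.2 - a.2.2 * b.2.1,
   a.2.2 * b.1 - a.1 * b.2.2,
   a.1 * b.2.1 - a.2.1 * b.1)

/-- The graph `Q = (X, Y, F) : ℤ² → ℝ³` of the discrete outer area distance. -/
def Qmap (X Y F : ℤ × ℤ → ℝ) (w : ℤ × ℤ) : ℝ × ℝ × ℝ := (X w, Y w, F w)

/-- The co-normal vector `ν = (−h₂, h₁, 1)`. -/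
def nuMap (h : ℤ × ℤ → ℝ × ℝ) (w : ℤ × ℤ) : ℝ × ℝ × ℝ := (-(h w).2, (h w).1, 1)

/-- For the discrete outer area distance: `Q(m+1,n) − Q(m,n) = ν(m,n) × ν(m,n−1)` and
`Q(m,n+1) − Q(m,n) = −ν(m,n) × ν(m−1,n)`. -/
theorem statement16 (h : ℤ × ℤ → ℝ × ℝ)
    (hharm : ∀ m n : ℤ,
      h (m + 1, n) + h (m - 1, n) + h (m, n + 1) + h (m, n - 1) = (4 : ℝ) • h (m, n))
    (X Y F : ℤ × ℤ → ℝ)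
    (hX1 : ∀ m n : ℤ, X (m + 1, n) - X (m, n) = (h (m, n)).1 - (h (m, n - 1)).1)
    (hX2 : ∀ m n : ℤ, X (m, n + 1) - X (m, n) = -((h (m, n)).1 - (h (m - 1, n)).1))
    (hY1 : ∀ m n : ℤ, Y (m + 1, n) - Y (m, n) = (h (m, n)).2 - (h (m, n - 1)).2)
    (hY2 : ∀ m n : ℤ, Y (m, n + 1) - Y (m, n) = -((h (m, n)).2 - (h (m - 1, n)).2))
    (hF1 : ∀ m n : ℤ, F (m + 1, n) - F (m, n) = -det2 (h (m, n - 1)) (h (m, n)))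
    (hF2 : ∀ m n : ℤ, F (m, n + 1) - F (m, n) = det2 (h (m - 1, n)) (h (m, n))) :
    ∀ m n : ℤ,
      Qmap X Y F (m + 1, n) - Qmap X Y F (m, n)
        = cross3 (nuMap h (m, n)) (nuMap h (m, n - 1)) ∧
      Qmap X Y F (m, n + 1) - Qmap X Y F (m, n)
        = -cross3 (nuMap h (m, n)) (nuMap h (m - 1, n)) := by
  intro m n
  have hx1 := hX1 m n; have hx2 := hX2 m n
  have hy1 := hY1 m n; have hy2 := hY2 m n
  have hf1 := hF1 m n; have hf2 := hF2 m n
  simp only [det2] at hf1 hf2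
  constructor <;>
    · simp only [Qmap, nuMap, cross3, Prod.mk_sub_mk, Prod.neg_mk, Prod.mk.injEq]
      refine ⟨by linarith, by linarith, by linarith⟩
end
end

section
/- Let h : ℤ² → ℝ² be discrete harmonic, let X, Y : ℤ² → ℝ satisfy the discrete Cauchy–Riemann equations with h (X(m+1,n) − X(m,n) = h₁(m,n) − h₁(m,n−1), X(m,n+1) − X(m,n) = −(h₁(m,n) − h₁(m−1,n)), analogously for Y with h₂), and let F : ℤ² → ℝ satisfy F(m+1,n) − F(m,n) = −det[h(m,n−1), h(m,n)] and F(m,n+1) − F(m,n) = det[h(m−1,n), h(m,n)]. Set Q = (X, Y, F) : ℤ² → ℝ³. Then Q is a discrete definite improper affine sphere: (1) for every (m,n) the four points Q(m,n), Q(m+1,n), Q(m,n+1), Q(m+1,n+1) lie in a common affine plane of ℝ³ (each edge of the quadrangle is orthogonal to ν(m,n) = (−h₂(m,n), h₁(m,n), 1)); (2) for every (m,n) the vector Q(m+1,n) + Q(m−1,n) + Q(m,n+1) + Q(m,n−1) − 4·Q(m,n) is parallel to (0,0,1). -/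
noncomputable section

/-- The linear functional `p ↦ -b p₁ + a p₂ + p₃` on `ℝ³`. -/
def nuFun (a b : ℝ) : (ℝ × ℝ × ℝ) →ₗ[ℝ] ℝ where
  toFun p := -b * p.1 + a * p.2.1 + p.2.2
  map_add' p q := by simp only [Prod.fst_add, Prod.snd_add]; ring
  map_smul' c p := by simp only [Prod.smul_fst, Prod.smul_snd, smul_eq_mul,
    RingHom.id_apply]; ring

lemma rank_ker_nuFun_le (a b : ℝ) :
    Module.rank ℝ (LinearMap.ker (nuFun a b)) ≤ 2 := by
  have hne : nuFun a b ≠ 0 := by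
    intro hf
    have : nuFun a b ((0 : ℝ), (0 : ℝ), (1 : ℝ)) = 0 := by rw [hf]; rfl
    simp [nuFun] at this
  have hrange : LinearMap.range (nuFun a b) = ⊤ :=
    (eq_bot_or_eq_top (LinearMap.range (nuFun a b))).resolve_left
      (by rw [LinearMap.range_eq_bot]; exact hne)
  have hfin : Module.finrank ℝ (LinearMap.ker (nuFun a b)) = 2 := by
    have := LinearMap.finrank_range_add_finrank_ker (nuFun a b)
    rw [hrange] at this
    simp only [finrank_top] at this
    have h3 : Module.finrank ℝ (ℝ × ℝ × ℝ) = 3 := by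
      simp [Module.finrank_prod]
    have h1 : Module.finrank ℝ ℝ = 1 := Module.finrank_self ℝ
    omega
  rw [← Module.finrank_eq_rank, hfin]
  norm_num

/-- `Q = (X, Y, F)` is a discrete definite improper affine sphere: the quadrangles
`Q(m,n), Q(m+1,n), Q(m,n+1), Q(m+1,n+1)` are planar, and the discrete Laplacian
`Q(m+1,n)+Q(m−1,n)+Q(m,n+1)+Q(m,n−1)−4Q(m,n)` is parallel to `(0,0,1)`. -/
theorem statement17 (h : ℤ × ℤ → ℝ × ℝ)
    (hharm : ∀ m n : ℤ,
      h (m + 1, n) + h (m - 1, n) + h (m, n + 1) + h (m, n - 1) = (4 : ℝ) • h (m, n))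
    (X Y F : ℤ × ℤ → ℝ)
    (hX1 : ∀ m n : ℤ, X (m + 1, n) - X (m, n) = (h (m, n)).1 - (h (m, n - 1)).1)
    (hX2 : ∀ m n : ℤ, X (m, n + 1) - X (m, n) = -((h (m, n)).1 - (h (m - 1, n)).1))
    (hY1 : ∀ m n : ℤ, Y (m + 1, n) - Y (m, n) = (h (m, n)).2 - (h (m, n - 1)).2)
    (hY2 : ∀ m n : ℤ, Y (m, n + 1) - Y (m, n) = -((h (m, n)).2 - (h (m - 1, n)).2))
    (hF1 : ∀ m n : ℤ, F (m + 1, n) - F (m, n) = -det2 (h (m, n - 1)) (h (m, n)))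
    (hF2 : ∀ m n : ℤ, F (m, n + 1) - F (m, n) = det2 (h (m - 1, n)) (h (m, n))) :
    ∀ m n : ℤ,
      Coplanar ℝ ({Qmap X Y F (m, n), Qmap X Y F (m + 1, n),
        Qmap X Y F (m, n + 1), Qmap X Y F (m + 1, n + 1)} : Set (ℝ × ℝ × ℝ)) ∧
      ∃ t : ℝ,
        Qmap X Y F (m + 1, n) + Qmap X Y F (m - 1, n) + Qmap X Y F (m, n + 1)
            + Qmap X Y F (m, n - 1) - (4 : ℝ) • Qmap X Y F (m, n)
          = t • (((0 : ℝ), (0 : ℝ), (1 : ℝ)) : ℝ × ℝ × ℝ) := by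
  intro m n
  constructor
  · -- Coplanarity
    set a := (h (m, n)).1 with ha
    set b := (h (m, n)).2 with hb
    set f := nuFun a b with hf
    set s : Set (ℝ × ℝ × ℝ) := {Qmap X Y F (m, n), Qmap X Y F (m + 1, n),
      Qmap X Y F (m, n + 1), Qmap X Y F (m + 1, n + 1)} with hs
    have key : ∀ p ∈ s, f p = f (Qmap X Y F (m, n)) := by
      intro p hp
      simp only [hs, Set.mem_insert_iff, Set.mem_singleton_iff] at hp
      have fval : ∀ q : ℝ × ℝ × ℝ, f q = -b * q.1 + a * q.2.1 + q.2.2 := fun q => rfl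
      rcases hp with rfl | rfl | rfl | rfl
      · rfl
      · have e1 := hX1 m n; have e2 := hY1 m n; have e3 := hF1 m n
        simp only [fval, Qmap, det2] at *
        linear_combination (-b) * e1 + a * e2 + e3
      · have e1 := hX2 m n; have e2 := hY2 m n; have e3 := hF2 m n
        simp only [fval, Qmap, det2] at *
        linear_combination (-b) * e1 + a * e2 + e3
      · have e1 := hX1 m (n + 1); have e2 := hY1 m (n + 1); have e3 := hF1 m (n + 1)
        have e4 := hX2 m n; have e5 := hY2 m n; have e6 := hF2 m n
        simp only [add_sub_cancel_right] at e1 e2 e3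
        simp only [fval, Qmap, det2] at *
        linear_combination (-b) * e1 + a * e2 + e3 + (-b) * e4 + a * e5 + e6
    have hker : vectorSpan ℝ s ≤ LinearMap.ker f := by
      rw [vectorSpan_def]
      refine Submodule.span_le.2 ?_
      rintro v hv
      rw [Set.mem_vsub] at hv
      rcases hv with ⟨p, hp, q, hq, rfl⟩
      simp only [SetLike.mem_coe, LinearMap.mem_ker]
      have : f (p -ᵥ q) = f p - f q := map_sub f p q
      rw [this, key p hp, key q hq, sub_self]
    exact (Submodule.rank_mono hker).trans (rank_ker_nuFun_le a b)
  · -- Laplacian parallel to (0,0,1)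
    refine ⟨F (m + 1, n) + F (m - 1, n) + F (m, n + 1) + F (m, n - 1) - 4 * F (m, n), ?_⟩
    have eX1 := hX1 m n; have eX1' := hX1 (m - 1) n
    have eX2 := hX2 m n; have eX2' := hX2 m (n - 1)
    have eY1 := hY1 m n; have eY1' := hY1 (m - 1) n
    have eY2 := hY2 m n; have eY2' := hY2 m (n - 1)
    simp only [sub_add_cancel] at eX1' eY1' eX2' eY2'
    simp only [Qmap, Prod.ext_iff, Prod.fst_add, Prod.snd_add, Prod.fst_sub, Prod.snd_sub,
      Prod.smul_fst, Prod.smul_snd, Prod.smul_mk, smul_eq_mul]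
    refine ⟨?_, ?_, ?_⟩
    · linear_combination eX1 - eX1' + eX2 - eX2'
    · linear_combination eY1 - eY1' + eY2 - eY2'
    · ring
end
end

section
/- Let h : ℤ² → ℝ² be discrete harmonic, let X, Y : ℤ² → ℝ satisfy the discrete Cauchy–Riemann equations with h, so that P = (X,Y) : ℤ² → ℝ² is discrete harmonic, and let F : ℤ² → ℝ satisfy F(m+1,n) − F(m,n) = −det[h(m,n−1), h(m,n)] and F(m,n+1) − F(m,n) = det[h(m−1,n), h(m,n)]. For (m,n) ∈ ℤ² set v₁ = P(m+1,n) − P(m,n), v₂ = P(m,n+1) − P(m,n), v₃ = P(m−1,n) − P(m,n), v₄ = P(m,n−1) − P(m,n) (so v₁+v₂+v₃+v₄ = 0). Then the discrete Laplacian of F satisfies Δ(F)(m,n) := F(m+1,n) + F(m−1,n) + F(m,n+1) + F(m,n−1) − 4·F(m,n) = det[v₃, v₂] + det[v₁, v₄], which is the area A(m,n) of the planar quadrangle with vertices P(m+1,n), P(m,n+1), P(m−1,n), P(m,n−1). -/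
noncomputable section

/-- The planar net `P = (X, Y) : ℤ² → ℝ²`. -/
def Pmap (X Y : ℤ × ℤ → ℝ) (w : ℤ × ℤ) : ℝ × ℝ := (X w, Y w)

/-- The discrete Laplacian of the discrete outer area distance `F` equals
`det[v₃,v₂] + det[v₁,v₄]`, the area of the planar quadrangle with vertices
`P(m+1,n), P(m,n+1), P(m−1,n), P(m,n−1)`. -/
theorem statement18 (h : ℤ × ℤ → ℝ × ℝ)
    (hharm : ∀ m n : ℤ,
      h (m + 1, n) + h (m - 1, n) + h (m, n + 1) + h (m, n - 1) = (4 : ℝ) • h (m, n))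
    (X Y F : ℤ × ℤ → ℝ)
    (hX1 : ∀ m n : ℤ, X (m + 1, n) - X (m, n) = (h (m, n)).1 - (h (m, n - 1)).1)
    (hX2 : ∀ m n : ℤ, X (m, n + 1) - X (m, n) = -((h (m, n)).1 - (h (m - 1, n)).1))
    (hY1 : ∀ m n : ℤ, Y (m + 1, n) - Y (m, n) = (h (m, n)).2 - (h (m, n - 1)).2)
    (hY2 : ∀ m n : ℤ, Y (m, n + 1) - Y (m, n) = -((h (m, n)).2 - (h (m - 1, n)).2))
    (hF1 : ∀ m n : ℤ, F (m + 1, n) - F (m, n) = -det2 (h (m, n - 1)) (h (m, n)))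
    (hF2 : ∀ m n : ℤ, F (m, n + 1) - F (m, n) = det2 (h (m - 1, n)) (h (m, n))) :
    ∀ m n : ℤ,
      F (m + 1, n) + F (m - 1, n) + F (m, n + 1) + F (m, n - 1) - 4 * F (m, n)
        = det2 (Pmap X Y (m - 1, n) - Pmap X Y (m, n))
            (Pmap X Y (m, n + 1) - Pmap X Y (m, n))
          + det2 (Pmap X Y (m + 1, n) - Pmap X Y (m, n))
              (Pmap X Y (m, n - 1) - Pmap X Y (m, n)) := by
  intro m n
  have hm : m - 1 + 1 = m := by ring
  have hn : n - 1 + 1 = n := by ring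
  have eF1 := hF1 m n
  have eF2 := hF1 (m - 1) n; rw [hm] at eF2
  have eF3 := hF2 m n
  have eF4 := hF2 m (n - 1); rw [hn] at eF4
  have eX1 := hX1 m n
  have eX2 := hX1 (m - 1) n; rw [hm] at eX2
  have eX3 := hX2 m n
  have eX4 := hX2 m (n - 1); rw [hn] at eX4
  have eY1 := hY1 m n
  have eY2 := hY1 (m - 1) n; rw [hm] at eY2
  have eY3 := hY2 m n
  have eY4 := hY2 m (n - 1); rw [hn] at eY4
  simp only [det2, Pmap, Prod.fst_sub, Prod.snd_sub] at *
  have vF1 : F (m + 1, n) = F (m, n) - ((h (m, n - 1)).1 * (h (m, n)).2 - (h (m, n - 1)).2 * (h (m, n)).1) := by linarith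
  have vF2 : F (m - 1, n) = F (m, n) + ((h (m - 1, n - 1)).1 * (h (m - 1, n)).2 - (h (m - 1, n - 1)).2 * (h (m - 1, n)).1) := by linarith
  have vF3 : F (m, n + 1) = F (m, n) + ((h (m - 1, n)).1 * (h (m, n)).2 - (h (m - 1, n)).2 * (h (m, n)).1) := by linarith
  have vF4 : F (m, n - 1) = F (m, n) - ((h (m - 1, n - 1)).1 * (h (m, n - 1)).2 - (h (m - 1, n - 1)).2 * (h (m, n - 1)).1) := by linarith
  have vX1 : X (m + 1, n) = X (m, n) + ((h (m, n)).1 - (h (m, n - 1)).1) := by linarith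
  have vX2 : X (m - 1, n) = X (m, n) - ((h (m - 1, n)).1 - (h (m - 1, n - 1)).1) := by linarith
  have vX3 : X (m, n + 1) = X (m, n) - ((h (m, n)).1 - (h (m - 1, n)).1) := by linarith
  have vX4 : X (m, n - 1) = X (m, n) + ((h (m, n - 1)).1 - (h (m - 1, n - 1)).1) := by linarith
  have vY1 : Y (m + 1, n) = Y (m, n) + ((h (m, n)).2 - (h (m, n - 1)).2) := by linarith
  have vY2 : Y (m - 1, n) = Y (m, n) - ((h (m - 1, n)).2 - (h (m - 1, n - 1)).2) := by linarith
  have vY3 : Y (m, n + 1) = Y (m, n) - ((h (m, n)).2 - (h (m - 1, n)).2) := by linarith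
  have vY4 : Y (m, n - 1) = Y (m, n) + ((h (m, n - 1)).2 - (h (m - 1, n - 1)).2) := by linarith
  rw [vF1, vF2, vF3, vF4, vX1, vX2, vX3, vX4, vY1, vY2, vY3, vY4]
  ring
end
end
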